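/- arXiv:0903.2555 — 2 statements merged into one kernel-verified Lean document; each statement's English description precedes it below -/
import Mathlib

section
/- Let X, Y be subsets of the positive integers and n ≥ 1 an integer with n+1 ∈ X. Then for all k ≥ 0, D_{n+1,k}^{X,Y} = (y_n − (k−1)) · D_{n,k−1}^{X,Y} + (n+1 − (y_n − k)) · D_{n,k}^{X,Y}, where the term with D_{n,k−1}^{X,Y} is omitted when k = 0. -/
/-- `cnt X n` is `|X ∩ [n]|` where `[n] = {1, ..., n}`. -/
noncomputable def cnt (X : Set ℕ) (n : ℕ) : ℕ := (X ∩ Set.Icc 1 n).ncard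

/-- `des_{X,Y}(σ)`: number of `i` with `σ_i > σ_{i+1}`, `σ_i ∈ X` and `σ_{i+1} ∈ Y`
(positions and values of `Fin n` are identified with `{1, ..., n}` via `i ↦ i + 1`). -/
noncomputable def desCount (X Y : Set ℕ) (n : ℕ) (σ : Equiv.Perm (Fin n)) : ℕ :=
  {i : Fin n | ∃ h : (i : ℕ) + 1 < n,
    (σ ⟨(i : ℕ) + 1, h⟩ : ℕ) < (σ i : ℕ) ∧
    ((σ i : ℕ) + 1) ∈ X ∧ ((σ ⟨(i : ℕ) + 1, h⟩ : ℕ) + 1) ∈ Y}.ncard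

/-- `D_{n,s}^{X,Y}`: the number of permutations of `[n]` with exactly `s`
`(X,Y)`-descents. -/
noncomputable def D (X Y : Set ℕ) (n s : ℕ) : ℕ :=
  Nat.card {σ : Equiv.Perm (Fin n) | desCount X Y n σ = s}

/-!
Every permutation of `[n + 1]` arises exactly once by inserting the value `n + 1` into a
permutation `σ` of `[n]`. As `n + 1 ∈ X` exceeds every other value, inserting it right before an
entry `b` creates a descent iff `b ∈ Y` and destroys the descent that ended at `b`, if any
(which needs `b ∈ Y` too), while its left neighbour never descends to it. So every insertion
raises `des` by `0` or `1`, and summing over the `n + 1` positions shows that exactly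
`y_n - des σ` of them raise it.
-/

open Finset

theorem List.ofFn_insertNth {α : Type*} {n : ℕ} (p : Fin (n + 1)) (x : α) (f : Fin n → α) :
    List.ofFn (Fin.insertNth p x f) = (List.ofFn f).insertIdx p x := by
  induction n with
  | zero => simp [Fin.fin_one_eq_zero p, Fin.insertNth_zero']
  | succ n ih =>
    cases p using Fin.cases with
    | zero => simp [Fin.insertNth_zero']
    | succ i => rw [← Fin.cons_self_tail f, Fin.insertNth_succ_cons, List.ofFn_cons,
        List.ofFn_cons, ih, Fin.val_succ, List.insertIdx_succ_cons]

theorem card_filter_eq_of_forall_eq_or_eq_succ {ι : Type*} (s : Finset ι) (e : ι → ℕ) {d : ℕ}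
    (he : ∀ i ∈ s, e i = d ∨ e i = d + 1) (k : ℕ) :
    (#{i ∈ s | e i = k} : ℤ) =
      (if d + 1 = k then ((∑ i ∈ s, e i : ℕ) : ℤ) - #s * d else 0) +
        (if d = k then (#s : ℤ) * (d + 1) - (∑ i ∈ s, e i : ℕ) else 0) := by
  have hsum : ∑ i ∈ s, e i = #s * d + #{i ∈ s | e i = d + 1} := by
    rw [card_filter, ← smul_eq_mul, ← sum_const, ← sum_add_distrib]
    refine sum_congr rfl fun i hi => ?_
    rcases he i hi with h | h <;> simp [h]
  have hcard : #{i ∈ s | e i = d} + #{i ∈ s | e i = d + 1} = #s := by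
    rw [← card_filter_add_card_filter_not (s := s) (fun i => e i = d)]
    congr 2
    exact filter_congr fun i hi => by rcases he i hi with h | h <;> simp [h]
  by_cases hk : d + 1 = k
  · subst hk
    rw [if_pos rfl, if_neg (by omega), hsum]
    push_cast
    ring
  · by_cases hk' : d = k
    · subst hk'
      rw [if_neg hk, if_pos rfl, hsum, ← hcard]
      push_cast
      ring
    · rw [if_neg hk, if_neg hk',
        filter_false_of_mem fun i hi => by rcases he i hi with h | h <;> omega]
      simp

section ListDescents

variable (X Y : Set ℕ)

def IsDescentPair (a b : ℕ) : Prop := b < a ∧ a + 1 ∈ X ∧ b + 1 ∈ Y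

open scoped Classical in
/-- Entries are `0`-based values, as in `desCount`: the entry `a` stands for the value `a + 1`. -/
noncomputable def desList : List ℕ → ℕ
  | a :: b :: l => (if IsDescentPair X Y a b then 1 else 0) + desList (b :: l)
  | _ => 0

variable {X Y} {m : ℕ}

theorem desList_insertIdx_eq_or_eq_succ (hm : m + 1 ∈ X) {l : List ℕ} (hl : ∀ a ∈ l, a < m)
    (p : ℕ) :
    desList X Y (l.insertIdx p m) = desList X Y l ∨
      desList X Y (l.insertIdx p m) = desList X Y l + 1 := by
  induction l generalizing p with
  | nil => rcases p with _ | _ | p <;> simp [desList]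
  | cons a t ih =>
    have ha : a < m := hl a (by simp)
    have not_desc : ¬ IsDescentPair X Y a m := fun h => by have := h.1; omega
    rcases p with _ | _ | q
    · cases t <;> simp only [List.insertIdx_zero, desList] <;> split_ifs <;> omega
    · cases t with
      | nil => simp [desList, not_desc]
      | cons b t =>
        simp only [List.insertIdx_succ_cons, List.insertIdx_zero, desList, if_neg not_desc,
          zero_add]
        by_cases hab : IsDescentPair X Y a b
        · have hmb : IsDescentPair X Y m b := ⟨hab.1.trans ha, hm, hab.2.2⟩
          simp [hab, hmb]
        · split_ifs <;> omega
    · cases t with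
      | nil => simp
      | cons b t =>
        have := ih (fun b hb => hl b (by simp [hb])) (q + 1)
        simp only [List.insertIdx_succ_cons, desList] at this ⊢
        omega

open scoped Classical in
theorem sum_desList_insertIdx (hm : m + 1 ∈ X) {l : List ℕ} (hl : ∀ a ∈ l, a < m) :
    ∑ p ∈ range (l.length + 1), desList X Y (l.insertIdx p m) =
      l.length * desList X Y l + l.countP (fun b => b + 1 ∈ Y) := by
  induction l with
  | nil => simp [desList]
  | cons a t ih =>
    have ha : a < m := hl a (by simp)
    have not_desc : ¬ IsDescentPair X Y a m := fun h => by have := h.1; omega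
    have desc_iff : IsDescentPair X Y m a ↔ a + 1 ∈ Y := ⟨fun h => h.2.2, fun h => ⟨ha, hm, h⟩⟩
    have ih := ih (fun b hb => hl b (by simp [hb]))
    rw [sum_range_succ'] at ih
    rw [List.length_cons, sum_range_succ', sum_range_succ']
    cases t with
    | nil => simp [desList, desc_iff, not_desc]
    | cons b t =>
      simp only [List.insertIdx_succ_cons, List.insertIdx_zero, desList, if_neg not_desc,
        desc_iff, sum_add_distrib, sum_const, card_range, smul_eq_mul, List.countP_cons,
        List.length_cons, decide_eq_true_eq] at ih ⊢
      linear_combination ih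

open scoped Classical in
theorem ncard_descents_eq_desList {L : ℕ} (f : Fin L → ℕ) :
    {i : Fin L | ∃ h : (i : ℕ) + 1 < L, IsDescentPair X Y (f i) (f ⟨i + 1, h⟩)}.ncard =
      desList X Y (List.ofFn f) := by
  rw [Set.ncard_eq_toFinset_card', Set.toFinset_ofPred, card_filter]
  induction L with
  | zero => simp [desList]
  | succ L ih =>
    obtain ⟨a, g, rfl⟩ : ∃ a g, f = Fin.cons a g := ⟨f 0, Fin.tail f, (Fin.cons_self_tail f).symm⟩
    have shift : ∀ i : Fin L,
        (∃ h : (i.succ : ℕ) + 1 < L + 1,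
          IsDescentPair X Y ((Fin.cons a g : Fin (L + 1) → ℕ) i.succ)
            ((Fin.cons a g : Fin (L + 1) → ℕ) ⟨i.succ + 1, h⟩)) ↔
        ∃ h : (i : ℕ) + 1 < L, IsDescentPair X Y (g i) (g ⟨i + 1, h⟩) :=
      fun i => ⟨fun ⟨h, hd⟩ => ⟨by simp at h; omega, hd⟩, fun ⟨h, hd⟩ => ⟨by simp; omega, hd⟩⟩
    simp only [Fin.sum_univ_succ, shift, ih, List.ofFn_cons]
    cases L with
    | zero => rw [if_neg fun ⟨h, _⟩ => by simp at h, List.ofFn_zero]; rfl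
    | succ L =>
      simp only [List.ofFn_succ, desList]
      rw [← List.ofFn_succ]
      exact congrArg (· + _) (if_congr ⟨fun ⟨_, hd⟩ => hd, fun hd => ⟨by simp, hd⟩⟩ rfl rfl)

end ListDescents

open scoped Classical in
theorem cnt_eq_card_filter_range (Y : Set ℕ) (n : ℕ) : cnt Y n = #{b ∈ range n | b + 1 ∈ Y} := by
  have : Y ∩ Set.Icc 1 n = (· + 1) '' ↑{b ∈ range n | b + 1 ∈ Y} := by
    ext v
    cases v <;> simp [and_comm]
  rw [cnt, this, Set.ncard_image_of_injective _ (add_left_injective 1), Set.ncard_coe_finset]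

open scoped Classical in
theorem cnt_eq_countP_ofFn (Y : Set ℕ) {n : ℕ} (σ : Equiv.Perm (Fin n)) :
    cnt Y n = (List.ofFn fun i => (σ i : ℕ)).countP (fun b => b + 1 ∈ Y) := by
  have hnodup : (List.ofFn fun i => (σ i : ℕ)).Nodup :=
    List.nodup_ofFn.2 (Fin.val_injective.comp σ.injective)
  have htoFinset : (List.ofFn fun i => (σ i : ℕ)).toFinset = range n := by
    ext v
    simp only [List.mem_toFinset, List.mem_ofFn, mem_range]
    exact ⟨fun ⟨i, hi⟩ => hi ▸ (σ i).isLt, fun hv => ⟨σ.symm ⟨v, hv⟩, by simp⟩⟩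
  rw [cnt_eq_card_filter_range, ← hnodup.card_eq_countP, htoFinset]

section InsertMax

variable {n : ℕ}

/-- In one-line notation, `insertMax σ p` is `σ` with the new largest value inserted at
position `p`. -/
def insertMax (σ : Equiv.Perm (Fin n)) (p : Fin (n + 1)) : Equiv.Perm (Fin (n + 1)) :=
  (finSuccEquiv' p).trans (σ.optionCongr.trans (finSuccEquiv' (Fin.last n)).symm)

@[simp]
theorem insertMax_apply_self (σ : Equiv.Perm (Fin n)) (p : Fin (n + 1)) :
    insertMax σ p p = Fin.last n := by
  simp [insertMax]

@[simp]
theorem insertMax_apply_succAbove (σ : Equiv.Perm (Fin n)) (p : Fin (n + 1)) (j : Fin n) :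
    insertMax σ p (p.succAbove j) = (σ j).castSucc := by
  simp [insertMax]

theorem val_insertMax (σ : Equiv.Perm (Fin n)) (p : Fin (n + 1)) :
    (fun i => (insertMax σ p i : ℕ)) = Fin.insertNth p n (fun j => (σ j : ℕ)) :=
  Fin.eq_insertNth_iff.2 ⟨by simp, by ext j; simp [Fin.removeNth]⟩

theorem insertMax_injective :
    Function.Injective fun x : Fin (n + 1) × Equiv.Perm (Fin n) => insertMax x.2 x.1 := by
  rintro ⟨p, σ⟩ ⟨q, ρ⟩ h
  simp only at h
  have hpq : p = q := calc
    p = (insertMax σ p).symm (Fin.last n) := ((Equiv.symm_apply_eq _).2 (by simp)).symm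
    _ = (insertMax ρ q).symm (Fin.last n) := by rw [h]
    _ = q := (Equiv.symm_apply_eq _).2 (by simp)
  subst hpq
  have hσρ : σ = ρ := Equiv.ext fun j => by
    simpa using congrArg (fun τ : Equiv.Perm (Fin (n + 1)) => τ (p.succAbove j)) h
  rw [hσρ]

noncomputable def insertMaxEquiv : Fin (n + 1) × Equiv.Perm (Fin n) ≃ Equiv.Perm (Fin (n + 1)) :=
  Equiv.ofBijective _ <| (Fintype.bijective_iff_injective_and_card _).2
    ⟨insertMax_injective, by simp [Fintype.card_perm, Nat.factorial_succ]⟩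

end InsertMax

section Recurrence

variable (X Y : Set ℕ)

theorem desCount_eq_desList {n : ℕ} (σ : Equiv.Perm (Fin n)) :
    desCount X Y n σ = desList X Y (List.ofFn fun i => (σ i : ℕ)) :=
  ncard_descents_eq_desList (f := fun i => (σ i : ℕ))

theorem desCount_insertMax {n : ℕ} (σ : Equiv.Perm (Fin n)) (p : Fin (n + 1)) :
    desCount X Y (n + 1) (insertMax σ p) =
      desList X Y ((List.ofFn fun i => (σ i : ℕ)).insertIdx p n) := by
  rw [desCount_eq_desList, val_insertMax, List.ofFn_insertNth]

theorem D_eq_card (n s : ℕ) : D X Y n s = #{σ : Equiv.Perm (Fin n) | desCount X Y n σ = s} := by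
  rw [D, Nat.card_coe_set_eq, Set.ncard_eq_toFinset_card', Set.toFinset_ofPred]

theorem D_succ_eq_sum (n k : ℕ) :
    D X Y (n + 1) k =
      ∑ σ : Equiv.Perm (Fin n), #{p | desCount X Y (n + 1) (insertMax σ p) = k} := by
  rw [D_eq_card, card_filter, ← insertMaxEquiv.sum_comp, Fintype.sum_prod_type_right]
  simp only [card_filter]
  rfl

theorem card_filter_desCount_insertMax {n : ℕ} (hX : n + 1 ∈ X) (σ : Equiv.Perm (Fin n))
    (k : ℕ) :
    (#{p | desCount X Y (n + 1) (insertMax σ p) = k} : ℤ) =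
      (if desCount X Y n σ + 1 = k then (cnt Y n : ℤ) - (k - 1) else 0) +
        (if desCount X Y n σ = k then (n : ℤ) + 1 - (cnt Y n - k) else 0) := by
  set l := List.ofFn fun i => (σ i : ℕ)
  have hl : ∀ a ∈ l, a < n := by simp [l, List.mem_ofFn]
  have hsum : ∑ p : Fin (n + 1), desCount X Y (n + 1) (insertMax σ p) =
      n * desCount X Y n σ + cnt Y n := by
    simp only [desCount_insertMax]
    rw [desCount_eq_desList, cnt_eq_countP_ofFn Y σ,
      Fin.sum_univ_eq_sum_range (fun p => desList X Y (l.insertIdx p n))]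
    simpa [l] using sum_desList_insertIdx hX hl
  rw [card_filter_eq_of_forall_eq_or_eq_succ _ _ (d := desCount X Y n σ) (fun p _ => by
    rw [desCount_insertMax, desCount_eq_desList]
    exact desList_insertIdx_eq_or_eq_succ hX hl p), hsum]
  rw [card_univ, Fintype.card_fin]
  split_ifs with hk hk' hk'
  · omega
  · subst hk; push_cast; ring
  · subst hk'; push_cast; ring
  · rfl

end Recurrence

theorem D_rec_mem_general (X Y : Set ℕ) (n : ℕ) (h : n + 1 ∈ X) (k : ℕ) :
    (D X Y (n + 1) k : ℤ) =
      (if k = 0 then 0 else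
        ((cnt Y n : ℤ) - ((k : ℤ) - 1)) * (D X Y n (k - 1) : ℤ)) +
        ((n : ℤ) + 1 - ((cnt Y n : ℤ) - (k : ℤ))) * (D X Y n k : ℤ) := by
  rw [D_succ_eq_sum, Nat.cast_sum]
  simp only [card_filter_desCount_insertMax X Y h]
  rw [sum_add_distrib, ← sum_filter, ← sum_filter, sum_const, sum_const, ← D_eq_card]
  rcases k with _ | k
  · simp [mul_comm]
  · simp [← D_eq_card, mul_comm]

/-- Recurrence for `D_{n,k}^{X,Y}` when `n+1 ∈ X`:
`D_{n+1,k} = (y_n - (k-1)) D_{n,k-1} + (n+1 - (y_n - k)) D_{n,k}`,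
the first term being omitted when `k = 0`. -/
theorem D_rec_mem (X Y : Set ℕ) (hX : 0 ∉ X) (hY : 0 ∉ Y) (n : ℕ) (hn : 1 ≤ n)
    (h : n + 1 ∈ X) (k : ℕ) :
    (D X Y (n + 1) k : ℤ) =
      (if k = 0 then 0 else
        ((cnt Y n : ℤ) - ((k : ℤ) - 1)) * (D X Y n (k - 1) : ℤ)) +
        ((n : ℤ) + 1 - ((cnt Y n : ℤ) - (k : ℤ))) * (D X Y n k : ℤ) :=
  D_rec_mem_general X Y n h k
end

section
/- Let X, Y be subsets of the positive integers and n ≥ 1 an integer with n+1 ∈ X − Y. Then for all k ≥ 0, V_{n+1,k}^{X,Y} = (y_n − (k−1)) · V_{n,k−1}^{X,Y} + (n+1 − (y_n − k)) · V_{n,k}^{X,Y}, where the term with V_{n,k−1}^{X,Y} is omitted when k = 0. -/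
/-- `val_{X,Y}(σ)`: number of positions `i ∈ [n]` with `i ∈ X` and `σ_i ∈ Y`
(positions and values of `Fin n` are identified with `{1, ..., n}` via `i ↦ i + 1`). -/
noncomputable def valCount (X Y : Set ℕ) (n : ℕ) (σ : Equiv.Perm (Fin n)) : ℕ :=
  {i : Fin n | ((i : ℕ) + 1) ∈ X ∧ (((σ i : ℕ)) + 1) ∈ Y}.ncard

/-- `V_{n,k}^{X,Y}`: the number of permutations of `[n]` with exactly `k`
`(X,Y)`-place-value pairs. -/
noncomputable def V (X Y : Set ℕ) (n k : ℕ) : ℕ :=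
  Nat.card {σ : Equiv.Perm (Fin n) | valCount X Y n σ = k}

/-!
A permutation of `[n+1]` is a permutation `τ` of `[n]` together with either `n+1` as a fixed
point, or a value `j ∈ [n]` moved to position `n+1` while `n+1` takes its old position
`τ⁻¹(j)`. As `n+1 ∈ X \ Y`, fixing `n+1` keeps `val τ`, while moving `j` to the end gains a
pair at position `n+1` iff `j ∈ Y` and loses the pair at `τ⁻¹(j)` iff moreover `τ⁻¹(j) ∈ X`:
`val` rises by one exactly when `j ∈ Y` and `τ⁻¹(j) ∉ X`, and is kept otherwise. There are
`y_n - val τ` such unpaired values `j`, so each `τ` with `val τ = k - 1` has `y_n - (k - 1)`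
extensions with value `k`, and each `τ` with `val τ = k` has `n + 1 - (y_n - k)`.
-/

open Equiv Finset

lemma card_filter_eq_ite_add_ite {γ : Type*} [Fintype γ] [DecidableEq γ] (R : Finset γ)
    (v : γ → ℕ) (m k : ℕ) (hv : ∀ o, v o = if o ∈ R then m + 1 else m) :
    (#{o | v o = k} : ℤ) =
      (if m = k then (Fintype.card γ - #R : ℤ) else 0) + (if m + 1 = k then (#R : ℤ) else 0) := by
  by_cases hm : m = k
  · subst hm
    have : ({o | v o = m} : Finset γ) = Rᶜ := by ext o; by_cases o ∈ R <;> simp_all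
    simp [this, card_compl, Nat.cast_sub (card_le_univ R)]
  by_cases hm1 : m + 1 = k
  · subst hm1
    have : ({o | v o = m + 1} : Finset γ) = R := by ext o; by_cases o ∈ R <;> simp_all
    simp [this]
  · have : ({o | v o = k} : Finset γ) = ∅ := by
      ext o; by_cases o ∈ R <;> simp_all
    simp [this, hm, hm1]

lemma card_filter_eq_sum_card_filter {α β γ : Type*} [Fintype α] [Fintype β] [Fintype γ]
    (e : β ≃ γ × α) (p : β → Prop) [DecidablePred p] :
    #{b | p b} = ∑ a, #{c | p (e.symm (c, a))} := by
  simp only [card_filter]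
  rw [← Fintype.sum_prod_type_right' (fun c a => if p (e.symm (c, a)) then 1 else 0)]
  exact Fintype.sum_equiv e _ _ fun b => by simp

lemma sum_ite_eq_mul_card {α : Type*} [Fintype α] (f : α → ℕ) (k : ℕ) (a : ℤ) :
    ∑ x, (if f x = k then a else 0) = a * #{x | f x = k} := by
  rw [← sum_filter, sum_const, nsmul_eq_mul, mul_comm]

noncomputable def permDecomposeLast (n : ℕ) :
    Perm (Fin (n + 1)) ≃ Option (Fin n) × Perm (Fin n) :=
  finSuccEquivLast.permCongr.trans Perm.decomposeOption

section PermDecomposeLast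

variable {n : ℕ}

lemma permDecomposeLast_symm_apply_last (o : Option (Fin n)) (τ : Perm (Fin n)) :
    (permDecomposeLast n).symm (o, τ) (Fin.last n) = finSuccEquivLast.symm o := by
  simp [permDecomposeLast, permCongr_apply]

lemma permDecomposeLast_symm_apply_castSucc (o : Option (Fin n)) (τ : Perm (Fin n))
    (i : Fin n) :
    (permDecomposeLast n).symm (o, τ) i.castSucc =
      finSuccEquivLast.symm (swap none o (some (τ i))) := by
  simp [permDecomposeLast, permCongr_apply]

lemma permDecomposeLast_symm_none_apply_castSucc (τ : Perm (Fin n)) (i : Fin n) :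
    (permDecomposeLast n).symm (none, τ) i.castSucc = (τ i).castSucc := by
  simp [permDecomposeLast_symm_apply_castSucc]

lemma permDecomposeLast_symm_some_apply_castSucc (j : Fin n) (τ : Perm (Fin n)) (i : Fin n) :
    (permDecomposeLast n).symm (some j, τ) i.castSucc =
      if τ i = j then Fin.last n else (τ i).castSucc := by
  rw [permDecomposeLast_symm_apply_castSucc, swap_apply_def]
  split_ifs <;> simp_all

open scoped Classical

variable (X Y : Set ℕ)

lemma valCount_eq_sum (σ : Perm (Fin n)) :
    valCount X Y n σ = ∑ i : Fin n, if (i : ℕ) + 1 ∈ X ∧ (σ i : ℕ) + 1 ∈ Y then 1 else 0 := by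
  rw [valCount, Set.ncard_eq_toFinset_card', Set.toFinset_ofPred, card_filter]

lemma V_eq_card (k : ℕ) : V X Y n k = #{σ : Perm (Fin n) | valCount X Y n σ = k} := by
  rw [V, Nat.card_coe_set_eq, Set.ncard_eq_toFinset_card', Set.toFinset_ofPred]

lemma cnt_eq_card : cnt Y n = #{j : Fin n | (j : ℕ) + 1 ∈ Y} := by
  have hinj : Function.Injective fun j : Fin n => (j : ℕ) + 1 := fun a b h => by
    simpa [Fin.ext_iff] using h
  have himage : Y ∩ Set.Icc 1 n = (fun j : Fin n => (j : ℕ) + 1) '' {j | (j : ℕ) + 1 ∈ Y} := by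
    ext x
    simp only [Set.mem_inter_iff, Set.mem_Icc, Set.mem_image, Set.mem_ofPred_eq]
    constructor
    · rintro ⟨hx, h1, h2⟩
      exact ⟨⟨x - 1, by omega⟩, by simpa [Nat.sub_add_cancel h1], by simp; omega⟩
    · rintro ⟨j, hj, rfl⟩
      exact ⟨hj, by omega, j.isLt⟩
  rw [cnt, himage, Set.ncard_image_of_injective _ hinj, Set.ncard_eq_toFinset_card',
    Set.toFinset_ofPred]

noncomputable def unpairedValues (τ : Perm (Fin n)) : Finset (Fin n) :=
  {j | (j : ℕ) + 1 ∈ Y ∧ (τ.symm j : ℕ) + 1 ∉ X}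

lemma valCount_eq_card_pairedValues (τ : Perm (Fin n)) :
    valCount X Y n τ = #{j : Fin n | (j : ℕ) + 1 ∈ Y ∧ (τ.symm j : ℕ) + 1 ∈ X} := by
  rw [valCount_eq_sum, card_filter]
  exact Fintype.sum_equiv τ _ _ fun i => by simp [and_comm]

lemma valCount_add_card_unpairedValues (τ : Perm (Fin n)) :
    valCount X Y n τ + #(unpairedValues X Y τ) = cnt Y n := by
  rw [valCount_eq_card_pairedValues, cnt_eq_card, unpairedValues,
    ← card_filter_add_card_filter_not (s := {j : Fin n | (j : ℕ) + 1 ∈ Y})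
      (fun j => (τ.symm j : ℕ) + 1 ∈ X), filter_filter, filter_filter]

lemma valCount_permDecomposeLast_symm_none (hY : n + 1 ∉ Y) (τ : Perm (Fin n)) :
    valCount X Y (n + 1) ((permDecomposeLast n).symm (none, τ)) = valCount X Y n τ := by
  rw [valCount_eq_sum, valCount_eq_sum, Fin.sum_univ_castSucc]
  simp [permDecomposeLast_symm_apply_last, permDecomposeLast_symm_none_apply_castSucc, hY]

lemma valCount_permDecomposeLast_symm_some (hX : n + 1 ∈ X) (hY : n + 1 ∉ Y) (j : Fin n)
    (τ : Perm (Fin n)) :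
    valCount X Y (n + 1) ((permDecomposeLast n).symm (some j, τ)) +
        (if (τ.symm j : ℕ) + 1 ∈ X ∧ (j : ℕ) + 1 ∈ Y then 1 else 0) =
      valCount X Y n τ + if (j : ℕ) + 1 ∈ Y then 1 else 0 := by
  rw [valCount_eq_sum, valCount_eq_sum, Fin.sum_univ_castSucc]
  simp only [permDecomposeLast_symm_apply_last, permDecomposeLast_symm_some_apply_castSucc,
    finSuccEquivLast_symm_some, Fin.val_last, Fin.val_castSucc, hX, true_and]
  have hτ : τ (τ.symm j) = j := τ.apply_symm_apply j
  rw [← add_sum_erase _ _ (mem_univ (τ.symm j)), ← add_sum_erase _ _ (mem_univ (τ.symm j)),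
    sum_congr rfl fun i hi => by rw [if_neg (τ.injective.ne (ne_of_mem_erase hi) |>.trans_eq hτ)]]
  simp [hτ, hY]
  ring

lemma valCount_permDecomposeLast_symm (h : n + 1 ∈ X \ Y) (o : Option (Fin n))
    (τ : Perm (Fin n)) :
    valCount X Y (n + 1) ((permDecomposeLast n).symm (o, τ)) =
      if o ∈ (unpairedValues X Y τ).map .some then valCount X Y n τ + 1
      else valCount X Y n τ := by
  rcases o with _ | j
  · simp [valCount_permDecomposeLast_symm_none X Y h.2]
  · have := valCount_permDecomposeLast_symm_some X Y h.1 h.2 j τ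
    by_cases hjY : (j : ℕ) + 1 ∈ Y <;> by_cases hjX : (τ.symm j : ℕ) + 1 ∈ X <;>
      simp_all [unpairedValues]

end PermDecomposeLast

theorem V_rec_case3_general (X Y : Set ℕ) (n : ℕ)
    (h : n + 1 ∈ X \ Y) (k : ℕ) :
    (V X Y (n + 1) k : ℤ) =
      (if k = 0 then 0 else
        ((cnt Y n : ℤ) - ((k : ℤ) - 1)) * (V X Y n (k - 1) : ℤ)) +
        ((n : ℤ) + 1 - ((cnt Y n : ℤ) - (k : ℤ))) * (V X Y n k : ℤ) := by
  have hfiber (τ : Perm (Fin n)) :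
      (#{o | valCount X Y (n + 1) ((permDecomposeLast n).symm (o, τ)) = k} : ℤ) =
        (if valCount X Y n τ = k then (n + 1 - (cnt Y n - k) : ℤ) else 0) +
          (if valCount X Y n τ + 1 = k then (cnt Y n - (k - 1) : ℤ) else 0) := by
    rw [card_filter_eq_ite_add_ite _ _ _ _ (valCount_permDecomposeLast_symm X Y h · τ), card_map,
      Fintype.card_option, Fintype.card_fin, ← valCount_add_card_unpairedValues X Y τ]
    split_ifs with hk hk' hk'
    · omega
    · subst hk; push_cast; ring
    · subst hk'; push_cast; ring
    · rfl
  rw [V_eq_card, card_filter_eq_sum_card_filter (permDecomposeLast n), Nat.cast_sum]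
  simp only [hfiber, sum_add_distrib, sum_ite_eq_mul_card, ← V_eq_card]
  rcases k with _ | k
  · simp
  · simp [← V_eq_card, add_comm]

/-- Recurrence for `V_{n,k}^{X,Y}` when `n+1 ∈ X - Y`:
`V_{n+1,k} = (y_n - (k-1)) V_{n,k-1} + (n+1 - (y_n - k)) V_{n,k}`,
the first term being omitted when `k = 0`. -/
theorem V_rec_case3 (X Y : Set ℕ) (hX : 0 ∉ X) (hY : 0 ∉ Y) (n : ℕ) (hn : 1 ≤ n)
    (h : n + 1 ∈ X \ Y) (k : ℕ) :
    (V X Y (n + 1) k : ℤ) =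
      (if k = 0 then 0 else
        ((cnt Y n : ℤ) - ((k : ℤ) - 1)) * (V X Y n (k - 1) : ℤ)) +
        ((n : ℤ) + 1 - ((cnt Y n : ℤ) - (k : ℤ))) * (V X Y n k : ℤ) :=
  V_rec_case3_general X Y n h k
end
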